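/- Let A be a finite-dimensional left-symmetric algebra with basis {e₁,...,eₙ} and dual basis {e₁*,...,eₙ*} of A*. Equip A ⊕ A* with the semidirect product left-symmetric structure A ⋉_{L*,0} A*, i.e., (x+a*)*(y+b*) = xy + L*(x)b* where ⟨L*(x)b*, z⟩ = -⟨b*, xz⟩. Then r = Σᵢ (eᵢ⊗eᵢ* + eᵢ*⊗eᵢ) ∈ (A⊕A*)⊗(A⊕A*) is a symmetric solution of the S-equation in A ⋉_{L*,0} A*. -/

import Mathlib

open TensorProduct

variable {F : Type*} [Field F] {A : Type*} [AddCommGroup A] [Module F A]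

/-- The semidirect product left-symmetric structure A ⋉_{L*,0} A*:
(x+a*)*(y+b*) = xy + L*(x)b*, where ⟨L*(x)b*, z⟩ = -⟨b*, xz⟩. -/
noncomputable def sdDualProd (mul : A →ₗ[F] A →ₗ[F] A)
    (p q : A × Module.Dual F A) : A × Module.Dual F A :=
  (mul p.1 q.1, -((mul p.1).dualMap q.2))

/-- The tensors of r = Σᵢ (eᵢ ⊗ eᵢ* + eᵢ* ⊗ eᵢ): the k-th first components. -/
noncomputable def rFst {ι : Type*} (e : Module.Basis ι F A) :
    ι ⊕ ι → A × Module.Dual F A :=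
  Sum.elim (fun i => (e i, 0)) (fun i => (0, e.coord i))

/-- The tensors of r = Σᵢ (eᵢ ⊗ eᵢ* + eᵢ* ⊗ eᵢ): the k-th second components. -/
noncomputable def rSnd {ι : Type*} (e : Module.Basis ι F A) :
    ι ⊕ ι → A × Module.Dual F A :=
  Sum.elim (fun i => (0, e.coord i)) (fun i => (e i, 0))

/-!
In `A ⋉_{L*,0} A*` every product with a left factor in `A*` vanishes, so expanding `r` in the
basis turns the S-equation into an identity between double sums of triple tensors. These match
up pairwise through the invariance of the canonical element `Σⱼ eⱼ ⊗ eⱼ*` of `A ⊗ A*` under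
`T ⊗ 1 = 1 ⊗ T*`, applied to the left multiplications `T = L(eᵢ)`.
-/

theorem Module.Basis.sum_tmul_coord_eq_sum_tmul_dualMap {R M : Type*} [CommSemiring R]
    [AddCommMonoid M] [Module R M] {ι : Type*} [Fintype ι]
    (b : Module.Basis ι R M) (T : M →ₗ[R] M) :
    ∑ j, T (b j) ⊗ₜ[R] b.coord j = ∑ j, b j ⊗ₜ[R] T.dualMap (b.coord j) := by
  conv_lhs => enter [2, j]; rw [← b.sum_repr (T (b j))]
  conv_rhs => enter [2, j]; rw [← b.sum_dual_apply_smul_coord (T.dualMap (b.coord j))]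
  simp only [sum_tmul, tmul_sum, smul_tmul, LinearMap.dualMap_apply, Module.Basis.coord_apply]
  exact Finset.sum_comm

section
variable (mul : A →ₗ[F] A →ₗ[F] A)

lemma sdDualProd_inl_inl (x y : A) :
    sdDualProd mul (x, 0) (y, 0) = (mul x y, 0) := by
  simp [sdDualProd]

lemma sdDualProd_inl_inr (x : A) (φ : Module.Dual F A) :
    sdDualProd mul (x, 0) (0, φ) = (0, -(mul x).dualMap φ) := by
  simp [sdDualProd]

lemma sdDualProd_inr (φ : Module.Dual F A) (p : A × Module.Dual F A) :
    sdDualProd mul (0, φ) p = 0 := by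
  ext <;> simp [sdDualProd]

variable {ι : Type*} [Fintype ι] (e : Module.Basis ι F A)
  {M : Type*} [AddCommGroup M] [Module F M] (a : A →ₗ[F] M) (q : Module.Dual F A →ₗ[F] M)

/- Stated for any `M` receiving `A` and `A*`: on tensor powers of `A × Module.Dual F A` the
elaborated `AddCommMonoid` instance is not reducibly the one underlying its `AddCommGroup`, so
lemmas such as `tmul_neg` do not fire there. -/
theorem sEquation_canonical_expanded :
    ∑ i, ∑ j, q (e.coord i) ⊗ₜ[F] (a (mul (e i) (e j)) ⊗ₜ[F] q (e.coord j)) +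
        ∑ i, ∑ j, q (e.coord i) ⊗ₜ[F] (q (-(mul (e i)).dualMap (e.coord j)) ⊗ₜ[F] a (e j)) +
      (∑ i, ∑ j, q (e.coord i) ⊗ₜ[F] (a (e j) ⊗ₜ[F] q (-(mul (e i)).dualMap (e.coord j))) +
        (∑ i, ∑ j, a (e i) ⊗ₜ[F] (q (e.coord j) ⊗ₜ[F] q ((mul (e j)).dualMap (e.coord i))) +
          ∑ i, ∑ j, q (e.coord i) ⊗ₜ[F]
            (q (e.coord j) ⊗ₜ[F] a (mul (e i) (e j) - mul (e j) (e i))))) =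
    ∑ i, ∑ j, a (mul (e i) (e j)) ⊗ₜ[F] (q (e.coord i) ⊗ₜ[F] q (e.coord j)) +
      ∑ i, ∑ j, q (-(mul (e i)).dualMap (e.coord j)) ⊗ₜ[F] (q (e.coord i) ⊗ₜ[F] a (e j)) := by
  have transpose := fun i => e.sum_tmul_coord_eq_sum_tmul_dualMap (mul (e i))
  -- `hₖₗ` is `transpose` with the `A`-factor in tensor slot `k` and the `A*`-factor in slot `l`.
  have h₂₃ : ∀ i, ∑ j, q (e.coord i) ⊗ₜ[F] (a (mul (e i) (e j)) ⊗ₜ[F] q (e.coord j)) =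
      ∑ j, q (e.coord i) ⊗ₜ[F] (a (e j) ⊗ₜ[F] q ((mul (e i)).dualMap (e.coord j))) := fun i => by
    simpa using congrArg (TensorProduct.mk F M _ (q (e.coord i)) ∘ₗ map a q) (transpose i)
  have h₃₂ : ∀ i, ∑ j, q (e.coord i) ⊗ₜ[F] (q ((mul (e i)).dualMap (e.coord j)) ⊗ₜ[F] a (e j)) =
      ∑ j, q (e.coord i) ⊗ₜ[F] (q (e.coord j) ⊗ₜ[F] a (mul (e i) (e j))) := fun i => by
    simpa using (congrArg (TensorProduct.mk F M _ (q (e.coord i)) ∘ₗ map q a ∘ₗ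
      (TensorProduct.comm F _ _).toLinearMap) (transpose i)).symm
  have h₁₃ : ∀ j, ∑ i, a (e i) ⊗ₜ[F] (q (e.coord j) ⊗ₜ[F] q ((mul (e j)).dualMap (e.coord i))) =
      ∑ i, a (mul (e j) (e i)) ⊗ₜ[F] (q (e.coord j) ⊗ₜ[F] q (e.coord i)) := fun j => by
    simpa using (congrArg (map a (TensorProduct.mk F M M (q (e.coord j)) ∘ₗ q)) (transpose j)).symm
  have h₃₁ : ∀ i, ∑ j, q ((mul (e i)).dualMap (e.coord j)) ⊗ₜ[F] (q (e.coord i) ⊗ₜ[F] a (e j)) =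
      ∑ j, q (e.coord j) ⊗ₜ[F] (q (e.coord i) ⊗ₜ[F] a (mul (e i) (e j))) := fun i => by
    simpa using (congrArg (map q (TensorProduct.mk F M M (q (e.coord i)) ∘ₗ a) ∘ₗ
      (TensorProduct.comm F _ _).toLinearMap) (transpose i)).symm
  simp only [map_neg, map_sub, tmul_neg, neg_tmul, tmul_sub, Finset.sum_neg_distrib,
    Finset.sum_sub_distrib, h₂₃, h₃₂, h₃₁]
  rw [Finset.sum_comm (f := fun i j => a (e i) ⊗ₜ[F] _), Finset.sum_congr rfl fun j _ => h₁₃ j]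
  rw [Finset.sum_comm (f := fun i j => q (e.coord j) ⊗ₜ[F] _)]
  abel
end

theorem S_equation_canonical_solution_general
    (mul : A →ₗ[F] A →ₗ[F] A)
    (ι : Type*) [Fintype ι] (e : Module.Basis ι F A) :
    (∑ k : ι ⊕ ι, (rFst e k) ⊗ₜ[F] (rSnd e k)
      = ∑ k : ι ⊕ ι, (rSnd e k) ⊗ₜ[F] (rFst e k))
    ∧ ((∑ k : ι ⊕ ι, ∑ l : ι ⊕ ι,
          (rFst e k) ⊗ₜ[F] ((sdDualProd mul (rSnd e k) (rFst e l)) ⊗ₜ[F] (rSnd e l)))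
      + ∑ k : ι ⊕ ι, ∑ l : ι ⊕ ι,
          (rFst e k) ⊗ₜ[F] ((rFst e l) ⊗ₜ[F]
            (sdDualProd mul (rSnd e k) (rSnd e l) - sdDualProd mul (rSnd e l) (rSnd e k)))
      = ∑ k : ι ⊕ ι, ∑ l : ι ⊕ ι,
          (sdDualProd mul (rFst e k) (rFst e l)) ⊗ₜ[F] ((rSnd e k) ⊗ₜ[F] (rSnd e l))) := by
  constructor
  · simp only [Fintype.sum_sum_type, rFst, rSnd, Sum.elim_inl, Sum.elim_inr]
    exact add_comm _ _
  · simp only [Fintype.sum_sum_type, rFst, rSnd, Sum.elim_inl, Sum.elim_inr, sdDualProd_inl_inl,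
      sdDualProd_inl_inr, sdDualProd_inr, zero_tmul, tmul_zero, Finset.sum_const_zero, add_zero,
      Prod.neg_mk, neg_zero, zero_add, sub_self, zero_sub, neg_neg, sub_zero, Prod.mk_sub_mk,
      Finset.sum_add_distrib]
    have h := sEquation_canonical_expanded mul e
      (LinearMap.inl F A (Module.Dual F A)) (LinearMap.inr F A _)
    simp only [LinearMap.inl_apply, LinearMap.inr_apply] at h
    exact h

/-- r = Σᵢ (eᵢ⊗eᵢ* + eᵢ*⊗eᵢ) is a symmetric solution of the S-equation
-r₁₂·r₁₃ + r₁₂·r₂₃ + [r₁₃,r₂₃] = 0 in A ⋉_{L*,0} A* (stated with the term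
r₁₂·r₁₃ moved to the right-hand side). -/
theorem S_equation_canonical_solution [FiniteDimensional F A]
    (mul : A →ₗ[F] A →ₗ[F] A)
    (hls : ∀ x y z : A,
      mul (mul x y) z - mul x (mul y z) = mul (mul y x) z - mul y (mul x z))
    (ι : Type*) [Fintype ι] (e : Module.Basis ι F A) :
    (∑ k : ι ⊕ ι, (rFst e k) ⊗ₜ[F] (rSnd e k)
      = ∑ k : ι ⊕ ι, (rSnd e k) ⊗ₜ[F] (rFst e k))
    ∧ ((∑ k : ι ⊕ ι, ∑ l : ι ⊕ ι,
          (rFst e k) ⊗ₜ[F] ((sdDualProd mul (rSnd e k) (rFst e l)) ⊗ₜ[F] (rSnd e l)))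
      + ∑ k : ι ⊕ ι, ∑ l : ι ⊕ ι,
          (rFst e k) ⊗ₜ[F] ((rFst e l) ⊗ₜ[F]
            (sdDualProd mul (rSnd e k) (rSnd e l) - sdDualProd mul (rSnd e l) (rSnd e k)))
      = ∑ k : ι ⊕ ι, ∑ l : ι ⊕ ι,
          (sdDualProd mul (rFst e k) (rFst e l)) ⊗ₜ[F] ((rSnd e k) ⊗ₜ[F] (rSnd e l))) :=
  S_equation_canonical_solution_general mul ι e
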